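/- Define P_n(x) = Π_{j=1}^{n} (x − v_j²) with v_k = 2·cos(2kπ/(2n+1)). Then P_n(x) = Σ_{ν=0}^{n} (−1)^ν·C(2n−ν, ν)·x^{n−ν}. -/

import Mathlib

/-!
Put `θ_j = 2jπ/(2n+1)`, so `v_j = 2 cos θ_j`. The rescaled Chebyshev polynomial `S_{2n}` satisfies
`S_{2n}(2 cos θ) sin θ = sin((2n+1)θ)`, hence vanishes at every `v_j` with `1 ≤ j ≤ n`. Its explicit
expansion `S_m(x) = ∑ (-1)^ν C(m-ν, ν) x^(m-2ν)` shows `S_{2n}(x) = Q(x²)`, where `Q` is the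
right-hand side. So `Q` is monic of degree `n` and vanishes at the `n` distinct numbers `v_j²`,
which forces it to be `∏ (X - v_j²)`.
-/

open Polynomial Real Finset

theorem Nat.choose_sub_eq_zero_of_lt_two_mul {m ν : ℕ} (h : m < 2 * ν) : (m - ν).choose ν = 0 :=
  Nat.choose_eq_zero_of_lt (by omega)

namespace Polynomial.Chebyshev

variable {R : Type*} [CommRing R]

-- Summand-wise form of `S_add_two`; for `2ν < m` it is Pascal's rule.
theorem S_summand_add_two (m ν : ℕ) :
    (-1) ^ (ν + 1) * ((m + 2 - (ν + 1)).choose (ν + 1) : R[X]) * X ^ (m + 2 - 2 * (ν + 1)) =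
      X * ((-1) ^ (ν + 1) * ((m + 1 - (ν + 1)).choose (ν + 1) : R[X]) *
        X ^ (m + 1 - 2 * (ν + 1))) - (-1) ^ ν * ((m - ν).choose ν : R[X]) * X ^ (m - 2 * ν) := by
  rcases lt_trichotomy m (2 * ν) with h | h | h
  · rw [Nat.choose_sub_eq_zero_of_lt_two_mul (by omega : m + 2 < 2 * (ν + 1)),
      Nat.choose_sub_eq_zero_of_lt_two_mul h,
      Nat.choose_sub_eq_zero_of_lt_two_mul (by omega : m + 1 < 2 * (ν + 1))]
    simp
  · subst h
    rw [Nat.choose_sub_eq_zero_of_lt_two_mul (by omega : 2 * ν + 1 < 2 * (ν + 1)),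
      show 2 * ν + 2 - (ν + 1) = ν + 1 by omega, show 2 * ν - ν = ν by omega,
      show 2 * ν + 2 - 2 * (ν + 1) = 0 by omega]
    simp [pow_succ]
  · obtain ⟨k, rfl⟩ : ∃ k, m = 2 * ν + 1 + k := ⟨m - (2 * ν + 1), by omega⟩
    rw [show 2 * ν + 1 + k + 2 - (ν + 1) = (ν + k + 1) + 1 by omega,
      show 2 * ν + 1 + k + 1 - (ν + 1) = ν + k + 1 by omega,
      show 2 * ν + 1 + k - ν = ν + k + 1 by omega,
      show 2 * ν + 1 + k + 2 - 2 * (ν + 1) = k + 1 by omega,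
      show 2 * ν + 1 + k + 1 - 2 * (ν + 1) = k by omega,
      show 2 * ν + 1 + k - 2 * ν = k + 1 by omega, Nat.choose_succ_succ']
    push_cast
    ring

variable (R)

theorem S_eq_sum_choose (m N : ℕ) (hN : m < 2 * N) :
    S R m = ∑ ν ∈ range N, (-1) ^ ν * ((m - ν).choose ν : R[X]) * X ^ (m - 2 * ν) := by
  induction m using Nat.twoStepInduction generalizing N with
  | zero | one =>
    rw [sum_eq_single_of_mem 0 (by simp; omega) fun ν _ hν => by
      rw [Nat.choose_sub_eq_zero_of_lt_two_mul (by omega)]; simp]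
    simp
  | more m ih0 ih1 =>
    obtain ⟨N, rfl⟩ : ∃ N', N = N' + 1 := ⟨N - 1, by omega⟩
    have h1 := ih1 (N + 1) (by omega)
    push_cast at h1 ⊢
    rw [S_add_two, h1, ih0 N (by omega), sum_range_succ', sum_range_succ' _ N, mul_add, mul_sum]
    simp_rw [S_summand_add_two, sum_sub_distrib]
    simp only [pow_zero, Nat.choose_zero_right, Nat.cast_one, one_mul, mul_zero, Nat.sub_zero]
    ring

theorem S_two_mul_eq_comp (n : ℕ) :
    S R (2 * n) = (∑ ν ∈ range (n + 1),
      Polynomial.C ((-1) ^ ν * ((2 * n - ν).choose ν : R)) * X ^ (n - ν)).comp (X ^ 2) := by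
  have h := S_eq_sum_choose R (2 * n) (n + 1) (by omega)
  push_cast at h
  rw [h, sum_comp]
  refine sum_congr rfl fun ν _ => ?_
  simp [← pow_mul, Nat.mul_sub]

end Polynomial.Chebyshev

namespace Polynomial

theorem Monic.eq_prod_X_sub_C_of_injOn {R ι : Type*} [CommRing R] [IsDomain R]
    {p : R[X]} (hp : p.Monic) {s : Finset ι} {f : ι → R} (hf : Set.InjOn f s)
    (hroot : ∀ i ∈ s, p.IsRoot (f i)) (hdeg : p.natDegree = #s) :
    p = ∏ i ∈ s, (X - C (f i)) := by
  classical
  have hroots : p.roots = (s.image f).val :=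
    roots_eq_of_natDegree_le_card_of_ne_zero (by simpa using hroot)
      (by rw [hdeg, card_image_of_injOn hf]) hp.ne_zero
  rw [← prod_image (f := fun a => X - C a) hf,
    ← prod_multiset_X_sub_C_of_monic_of_roots_card_eq hp, hroots]
  · rfl
  · rw [hroots, hdeg, Finset.card_val, card_image_of_injOn hf]

section DescendingSum

variable {R : Type*} [Semiring R] (n : ℕ) (c : ℕ → R)

theorem sum_range_succ_C_mul_X_pow_sub (hc : c 0 = 1) :
    ∑ ν ∈ range (n + 1), C (c ν) * X ^ (n - ν) =
      X ^ n + ∑ ν ∈ range n, C (c (ν + 1)) * X ^ (n - (ν + 1)) := by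
  rw [sum_range_succ', hc, add_comm]
  simp

theorem degree_sum_range_C_mul_X_pow_sub_succ_lt :
    (∑ ν ∈ range n, C (c (ν + 1)) * X ^ (n - (ν + 1))).degree < (n : WithBot ℕ) := by
  rw [← mem_degreeLT]
  refine Submodule.sum_mem _ fun ν hν => mem_degreeLT.2 ((degree_C_mul_X_pow_le _ _).trans_lt ?_)
  exact_mod_cast (by grind : n - (ν + 1) < n)

theorem monic_sum_range_C_mul_X_pow_sub (hc : c 0 = 1) :
    (∑ ν ∈ range (n + 1), C (c ν) * X ^ (n - ν)).Monic := by
  rw [sum_range_succ_C_mul_X_pow_sub n c hc]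
  exact monic_X_pow_add (degree_sum_range_C_mul_X_pow_sub_succ_lt n c)

theorem natDegree_sum_range_C_mul_X_pow_sub [Nontrivial R] (hc : c 0 = 1) :
    (∑ ν ∈ range (n + 1), C (c ν) * X ^ (n - ν)).natDegree = n := by
  rw [sum_range_succ_C_mul_X_pow_sub n c hc, natDegree_add_eq_left_of_degree_lt, natDegree_X_pow]
  simpa using degree_sum_range_C_mul_X_pow_sub_succ_lt n c

end DescendingSum

end Polynomial

section

variable {n j : ℕ}

theorem two_mul_pi_div_mem_Icc (hjn : j ≤ n) : 2 * j * π / (2 * n + 1) ∈ Set.Icc 0 π := by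
  have hjn' : (j : ℝ) ≤ n := by exact_mod_cast hjn
  constructor
  · positivity
  · rw [div_le_iff₀ (by positivity)]
    nlinarith [pi_pos]

theorem sin_two_mul_pi_div_pos (hj : 0 < j) (hjn : j ≤ n) :
    0 < sin (2 * j * π / (2 * n + 1)) := by
  have hjn' : (j : ℝ) ≤ n := by exact_mod_cast hjn
  apply sin_pos_of_pos_of_lt_pi
  · positivity
  · rw [div_lt_iff₀ (by positivity)]
    nlinarith [pi_pos]

theorem eval_S_two_mul_cos_two_mul_pi_div (hj : 0 < j) (hjn : j ≤ n) :
    (Chebyshev.S ℝ (2 * n)).eval (2 * cos (2 * j * π / (2 * n + 1))) = 0 := by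
  have h := Chebyshev.S_two_mul_real_cos (2 * j * π / (2 * n + 1)) (2 * n)
  rw [show (((2 * n : ℤ) : ℝ) + 1) * (2 * j * π / (2 * n + 1)) = (2 * j : ℕ) * π by
    push_cast; field_simp, sin_nat_mul_pi] at h
  exact (mul_eq_zero.1 h).resolve_right (sin_two_mul_pi_div_pos hj hjn).ne'

theorem injOn_two_mul_cos_two_mul_pi_div_sq :
    Set.InjOn (fun j : ℕ => (2 * cos (2 * j * π / (2 * n + 1))) ^ 2) (Icc 1 n) := by
  intro i hi j hj hij
  simp only [coe_Icc, Set.mem_Icc] at hi hj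
  rcases sq_eq_sq_iff_eq_or_eq_neg.1 hij with h | h
  · have := injOn_cos (two_mul_pi_div_mem_Icc hi.2) (two_mul_pi_div_mem_Icc hj.2) (by linarith)
    field_simp at this
    exact_mod_cast this
  -- `v_i = -v_j` would force `θ_i = π - θ_j`, i.e. `2i + 2j = 2n + 1`, impossible by parity.
  · have hθj := two_mul_pi_div_mem_Icc (n := n) hj.2
    have hθ := injOn_cos (two_mul_pi_div_mem_Icc hi.2)
      (x₂ := π - 2 * j * π / (2 * n + 1)) ⟨by linarith [hθj.2], by linarith [hθj.1]⟩
      (by rw [cos_pi_sub]; linarith)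
    have hodd : 2 * i + 2 * j = 2 * n + 1 := by
      field_simp at hθ
      exact_mod_cast (by linarith : (2 * i + 2 * j : ℝ) = 2 * n + 1)
    omega

end

theorem stmt_17_general (n : ℕ) (v : ℕ → ℝ)
    (hv : ∀ k, v k = 2 * Real.cos (2 * k * π / (2 * n + 1))) :
    ∏ j ∈ Finset.Icc 1 n, (X - C (v j ^ 2)) =
      ∑ ν ∈ Finset.range (n + 1),
        C ((-1 : ℝ) ^ ν * ((2 * n - ν).choose ν : ℝ)) * X ^ (n - ν) := by
  obtain rfl : v = fun k : ℕ => 2 * cos (2 * k * π / (2 * n + 1)) := funext hv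
  set c : ℕ → ℝ := fun ν => (-1 : ℝ) ^ ν * ((2 * n - ν).choose ν : ℝ)
  have hc : c 0 = 1 := by simp [c]
  refine ((monic_sum_range_C_mul_X_pow_sub n c hc).eq_prod_X_sub_C_of_injOn
    injOn_two_mul_cos_two_mul_pi_div_sq (fun j hj => ?_) ?_).symm
  · rw [mem_Icc] at hj
    have h := eval_S_two_mul_cos_two_mul_pi_div (n := n) hj.1 hj.2
    rwa [Chebyshev.S_two_mul_eq_comp, eval_comp, eval_pow, eval_X] at h
  · rw [natDegree_sum_range_C_mul_X_pow_sub n c hc, Nat.card_Icc, Nat.add_sub_cancel]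

theorem stmt_17 (n : ℕ) (hn : 0 < n) (v : ℕ → ℝ)
    (hv : ∀ k, v k = 2 * Real.cos (2 * k * π / (2 * n + 1))) :
    ∏ j ∈ Finset.Icc 1 n, (X - C (v j ^ 2)) =
      ∑ ν ∈ Finset.range (n + 1),
        C ((-1 : ℝ) ^ ν * ((2 * n - ν).choose ν : ℝ)) * X ^ (n - ν) :=
  stmt_17_general n v hv
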